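/- In the setting of the GAME optimality inequality — X = W★ + E, Ω ⊆ [n]×[m], meta-categories c ∈ 𝒞 with row sets I_c covering [n] and row multiplicity κ(i) := |{c : i ∈ I_c}| ≥ 1, regularization weights λ_c ≥ 0, Ŵ a minimizer of W ↦ (1/2)‖P_Ω(X − W)‖_F² + Σ_c λ_c‖W_c‖_* over a feasible set containing W★, and Δ := Ŵ − W★ — let Ẽ^{(c)} ∈ ℝ^{|I_c|×m} have entries [P_Ω(E)]_{ij}/κ(i) for i ∈ I_c, j ∈ [m]. For each c, let W★_c have rank r_c with thin SVD defining projections P_{M_c⊥}(B) := P_{U_c⊥} B P_{V_c⊥} and P_{M_c}(B) := B − P_{M_c⊥}(B), where U_c, V_c span the column and row spaces of W★_c. If λ_c ≥ 2‖Ẽ^{(c)}‖_op for every c ∈ 𝒞, then both (i) Σ_{c∈𝒞} λ_c ‖P_{M_c⊥}(Δ_c)‖_* ≤ 3 Σ_{c∈𝒞} λ_c ‖P_{M_c}(Δ_c)‖_*, and (ii) (1/2)‖P_Ω(Δ)‖_F² ≤ (3/2) Σ_{c∈𝒞} λ_c ‖P_{M_c}(Δ_c)‖_*. -/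

import Mathlib

/-
Comparing the objective at `Ŵ` and at `W★` gives the basic inequality
`½‖P_Ω(Δ)‖_F² ≤ ⟨P_Ω(E), Δ⟩ + Σ_c λ_c (‖W★_c‖_* - ‖Ŵ_c‖_*)`. Sharing the noise of row `i` equally
among the `κ(i)` blocks containing it splits `⟨P_Ω(E), Δ⟩ = Σ_c ⟨Ẽ^{(c)}, Δ_c⟩`, and trace
duality `⟨A, B⟩ ≤ ‖A‖_op ‖B‖_*` bounds each term by `(λ_c / 2) ‖Δ_c‖_*`.

The nuclear norm is decomposable: if `W` and `Z` have orthogonal column spaces and orthogonal row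
spaces, then `‖W‖_* + ‖Z‖_* ≤ ‖W + Z‖_*`, since `‖·‖_*` is the maximum of `⟨Q, ·⟩` over
contractions `Q` and the sum of the polar parts of `W` and `Z` is still a contraction. Applied to
`W★_c` and `P_{M_c⊥}(Δ_c)` this gives `‖W★_c‖_* - ‖Ŵ_c‖_* ≤ ‖P_{M_c}(Δ_c)‖_* - ‖P_{M_c⊥}(Δ_c)‖_*`,
and adding up,
`½‖P_Ω(Δ)‖_F² ≤ (3/2) Σ_c λ_c ‖P_{M_c}(Δ_c)‖_* - (1/2) Σ_c λ_c ‖P_{M_c⊥}(Δ_c)‖_*`,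
which contains both claims.
-/

open Matrix

theorem Matrix.isHermitian_transpose_mul_self {m n α : Type*} [Fintype m]
    [NonUnitalCommSemiring α] [StarRing α] [TrivialStar α] (A : Matrix m n α) :
    (Aᵀ * A).IsHermitian := by
  rw [IsHermitian, conjTranspose_eq_transpose_of_trivial, transpose_mul, transpose_transpose]

/-- The nuclear norm of a real matrix: the sum of its singular values. -/
noncomputable def nuclearNorm {p m : Type*} [Fintype p] [Fintype m] [DecidableEq m]
    (A : Matrix p m ℝ) : ℝ :=
  ∑ i, Real.sqrt ((Matrix.isHermitian_transpose_mul_self A).eigenvalues i)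

/-- The operator (spectral) norm of a real matrix: the largest singular value. -/
noncomputable def opNorm {p m : Type*} [Fintype p] [Fintype m] [DecidableEq m]
    (A : Matrix p m ℝ) : ℝ :=
  ⨆ i, Real.sqrt ((Matrix.isHermitian_transpose_mul_self A).eigenvalues i)

/-- The Frobenius norm of a real matrix. -/
noncomputable def frobNorm {p m : Type*} [Fintype p] [Fintype m]
    (A : Matrix p m ℝ) : ℝ :=
  Real.sqrt (∑ i, ∑ j, (A i j) ^ 2)

/-- The row multiplicity `κ(i) = |{c : i ∈ I_c}|`. -/
def kappa {n : ℕ} {C : Type*} [Fintype C] (I : C → Finset (Fin n)) (i : Fin n) : ℕ :=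
  (Finset.univ.filter fun c => i ∈ I c).card

/-- Row submatrix `W_c = W[I_c, :]`. -/
def rowSub {n m : ℕ} (I : Finset (Fin n)) (W : Matrix (Fin n) (Fin m) ℝ) :
    Matrix I (Fin m) ℝ :=
  Matrix.of fun i j => W i.1 j

/-- The projection `P_Ω` that zeros out all entries outside `Ω`. -/
def projObs {n m : ℕ} (Ω : Finset (Fin n × Fin m)) (A : Matrix (Fin n) (Fin m) ℝ) :
    Matrix (Fin n) (Fin m) ℝ :=
  Matrix.of fun i j => if (i, j) ∈ Ω then A i j else 0

/-- The GAME objective `W ↦ (1/2)‖P_Ω(X − W)‖_F² + Σ_c λ_c ‖W_c‖_*`. -/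
noncomputable def gameObj {n m : ℕ} {C : Type*} [Fintype C]
    (Ω : Finset (Fin n × Fin m)) (X : Matrix (Fin n) (Fin m) ℝ)
    (I : C → Finset (Fin n)) (lam : C → ℝ) (W : Matrix (Fin n) (Fin m) ℝ) : ℝ :=
  (1 / 2) * frobNorm (projObs Ω (X - W)) ^ 2 +
    ∑ c : C, lam c * nuclearNorm (rowSub (I c) W)

section DotProduct

variable {ι κ : Type*} [Fintype ι] [Fintype κ]

lemma dotProduct_le_mul_of_dotProduct_self_le {x y : ι → ℝ} {s t : ℝ} (hs : 0 ≤ s) (ht : 0 ≤ t)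
    (hx : x ⬝ᵥ x ≤ s ^ 2) (hy : y ⬝ᵥ y ≤ t ^ 2) : x ⬝ᵥ y ≤ s * t := by
  have hcs : (x ⬝ᵥ y) ^ 2 ≤ (x ⬝ᵥ x) * (y ⬝ᵥ y) := by
    simpa only [dotProduct, sq] using Finset.sum_mul_sq_le_sq_mul_sq Finset.univ x y
  have hyy : 0 ≤ y ⬝ᵥ y := by simpa using dotProduct_self_star_nonneg y
  have hst : (x ⬝ᵥ y) ^ 2 ≤ (s * t) ^ 2 := by
    rw [mul_pow]
    exact hcs.trans (mul_le_mul hx hy hyy (sq_nonneg s))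
  exact le_of_abs_le (abs_le_of_sq_le_sq hst (mul_nonneg hs ht))

lemma mulVec_dotProduct_mulVec (A B : Matrix ι κ ℝ) (x y : κ → ℝ) :
    (A *ᵥ x) ⬝ᵥ (B *ᵥ y) = x ⬝ᵥ ((Aᵀ * B) *ᵥ y) := by
  rw [← mulVec_mulVec, dotProduct_mulVec x Aᵀ, vecMul_transpose]

lemma dotProduct_eq_zero_of_mulVec {P : Matrix ι ι ℝ} (hP : Pᵀ = P) {a b : ι → ℝ}
    (ha : P *ᵥ a = 0) (hb : P *ᵥ b = b) : a ⬝ᵥ b = 0 := by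
  rw [← hb, dotProduct_mulVec, ← mulVec_transpose, hP, ha, zero_dotProduct]

lemma dotProduct_self_eq_add_of_orthogonalProjection {P : Matrix ι ι ℝ} (hP : Pᵀ = P)
    (hPP : P * P = P) (x : ι → ℝ) :
    x ⬝ᵥ x = (x - P *ᵥ x) ⬝ᵥ (x - P *ᵥ x) + (P *ᵥ x) ⬝ᵥ (P *ᵥ x) := by
  have hPx : (P *ᵥ x) ⬝ᵥ (P *ᵥ x) = x ⬝ᵥ (P *ᵥ x) := by
    rw [mulVec_dotProduct_mulVec, hP, hPP]
  rw [sub_dotProduct, dotProduct_sub, dotProduct_sub, hPx, dotProduct_comm (P *ᵥ x) x]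
  ring

lemma mul_eq_zero_of_mulVec_mulVec_eq_zero {P : Matrix ι ι ℝ} {A : Matrix ι κ ℝ}
    (h : ∀ y, P *ᵥ (A *ᵥ y) = 0) : P * A = 0 :=
  ext_iff_mulVec.2 fun y => by rw [← mulVec_mulVec, h, zero_mulVec]

lemma trace_transpose_mul_comm (A B : Matrix ι κ ℝ) : trace (Aᵀ * B) = trace (Bᵀ * A) := by
  rw [← trace_transpose, transpose_mul, transpose_transpose]

lemma trace_transpose_mul_eq_sum (A B : Matrix ι κ ℝ) :
    trace (Aᵀ * B) = ∑ i, ∑ j, A i j * B i j := by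
  simp only [trace, diag, mul_apply, transpose_apply]
  exact Finset.sum_comm

lemma add_mulVec_dotProduct_self_le {Q₁ Q₂ : Matrix ι κ ℝ} {P : Matrix ι ι ℝ} {R : Matrix κ κ ℝ}
    (hQ₁ : ∀ y, (Q₁ *ᵥ y) ⬝ᵥ (Q₁ *ᵥ y) ≤ y ⬝ᵥ y) (hQ₂ : ∀ y, (Q₂ *ᵥ y) ⬝ᵥ (Q₂ *ᵥ y) ≤ y ⬝ᵥ y)
    (hP : Pᵀ = P) (hR : Rᵀ = R) (hRR : R * R = R) (hPQ₁ : P * Q₁ = 0) (hPQ₂ : P * Q₂ = Q₂)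
    (hQ₁R : Q₁ * R = 0) (hQ₂R : Q₂ * R = Q₂) (x : κ → ℝ) :
    ((Q₁ + Q₂) *ᵥ x) ⬝ᵥ ((Q₁ + Q₂) *ᵥ x) ≤ x ⬝ᵥ x := by
  have h₁ : Q₁ *ᵥ x = Q₁ *ᵥ (x - R *ᵥ x) := by
    rw [mulVec_sub, mulVec_mulVec, hQ₁R, zero_mulVec, sub_zero]
  have h₂ : Q₂ *ᵥ x = Q₂ *ᵥ (R *ᵥ x) := by rw [mulVec_mulVec, hQ₂R]
  have horth : (Q₁ *ᵥ x) ⬝ᵥ (Q₂ *ᵥ x) = 0 := dotProduct_eq_zero_of_mulVec hP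
    (by rw [mulVec_mulVec, hPQ₁, zero_mulVec]) (by rw [mulVec_mulVec, hPQ₂])
  rw [add_mulVec, add_dotProduct, dotProduct_add, dotProduct_add, dotProduct_comm (Q₂ *ᵥ x), horth,
    dotProduct_self_eq_add_of_orthogonalProjection hR hRR x, h₁, h₂]
  linarith [hQ₁ (x - R *ᵥ x), hQ₂ (R *ᵥ x)]

end DotProduct

section SingularValues

variable {p m : Type*} [Fintype p] [Fintype m] [DecidableEq m]

noncomputable def singularValue (A : Matrix p m ℝ) (j : m) : ℝ :=
  √((isHermitian_transpose_mul_self A).eigenvalues j)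

noncomputable def rightSingularVector (A : Matrix p m ℝ) (j : m) : m → ℝ :=
  (isHermitian_transpose_mul_self A).eigenvectorBasis j

lemma nuclearNorm_eq_sum_singularValue (A : Matrix p m ℝ) :
    nuclearNorm A = ∑ j, singularValue A j := rfl

lemma singularValue_nonneg (A : Matrix p m ℝ) (j : m) : 0 ≤ singularValue A j :=
  Real.sqrt_nonneg _

lemma nuclearNorm_nonneg (A : Matrix p m ℝ) : 0 ≤ nuclearNorm A :=
  Finset.sum_nonneg fun j _ => singularValue_nonneg A j

lemma singularValue_le_opNorm (A : Matrix p m ℝ) (j : m) : singularValue A j ≤ opNorm A :=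
  le_ciSup (Set.finite_range _).bddAbove j

lemma singularValue_sq (A : Matrix p m ℝ) (j : m) :
    singularValue A j ^ 2 = (isHermitian_transpose_mul_self A).eigenvalues j := by
  refine Real.sq_sqrt ?_
  simpa [conjTranspose_eq_transpose_of_trivial] using
    (posSemidef_conjTranspose_mul_self A).eigenvalues_nonneg j

lemma rightSingularVector_dotProduct (A : Matrix p m ℝ) (i j : m) :
    rightSingularVector A i ⬝ᵥ rightSingularVector A j = if i = j then 1 else 0 := by
  simpa [rightSingularVector, PiLp.inner_apply, dotProduct, mul_comm] using
    orthonormal_iff_ite.mp (isHermitian_transpose_mul_self A).eigenvectorBasis.orthonormal i j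

lemma sum_vecMulVec_rightSingularVector (A : Matrix p m ℝ) :
    ∑ j, vecMulVec (rightSingularVector A j) (rightSingularVector A j) = 1 := by
  rw [← mem_unitaryGroup_iff.mp (isHermitian_transpose_mul_self A).eigenvectorUnitary.2]
  ext i k
  simp [rightSingularVector, mul_apply, vecMulVec_apply, Matrix.sum_apply]

lemma sum_dotProduct_rightSingularVector_smul (A : Matrix p m ℝ) (x : m → ℝ) :
    ∑ j, (rightSingularVector A j ⬝ᵥ x) • rightSingularVector A j = x := by
  conv_rhs => rw [← one_mulVec x, ← sum_vecMulVec_rightSingularVector A]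
  simp only [sum_mulVec, vecMulVec_mulVec, op_smul_eq_smul]

lemma sum_dotProduct_rightSingularVector_sq (A : Matrix p m ℝ) (x : m → ℝ) :
    ∑ j, (rightSingularVector A j ⬝ᵥ x) ^ 2 = x ⬝ᵥ x := by
  calc ∑ j, (rightSingularVector A j ⬝ᵥ x) ^ 2
      = (∑ j, (rightSingularVector A j ⬝ᵥ x) • rightSingularVector A j) ⬝ᵥ x := by
        simp only [sum_dotProduct, smul_dotProduct, smul_eq_mul, sq]
    _ = x ⬝ᵥ x := by rw [sum_dotProduct_rightSingularVector_smul]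

lemma transpose_mul_self_mulVec_rightSingularVector (A : Matrix p m ℝ) (j : m) :
    (Aᵀ * A) *ᵥ rightSingularVector A j = singularValue A j ^ 2 • rightSingularVector A j := by
  rw [singularValue_sq]
  exact (isHermitian_transpose_mul_self A).mulVec_eigenvectorBasis j

lemma mulVec_dotProduct_self_eq_sum (A : Matrix p m ℝ) (x : m → ℝ) :
    (A *ᵥ x) ⬝ᵥ (A *ᵥ x) = ∑ j, singularValue A j ^ 2 * (rightSingularVector A j ⬝ᵥ x) ^ 2 := by
  calc (A *ᵥ x) ⬝ᵥ (A *ᵥ x)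
      = ((Aᵀ * A) *ᵥ ∑ j, (rightSingularVector A j ⬝ᵥ x) • rightSingularVector A j) ⬝ᵥ x := by
        rw [sum_dotProduct_rightSingularVector_smul, mulVec_dotProduct_mulVec, dotProduct_comm]
    _ = _ := by
        simp only [mulVec_sum, mulVec_smul, transpose_mul_self_mulVec_rightSingularVector,
          smul_smul, sum_dotProduct, smul_dotProduct, smul_eq_mul]
        exact Finset.sum_congr rfl fun j _ => by ring

lemma mulVec_rightSingularVector_dotProduct_self (A : Matrix p m ℝ) (j : m) :
    (A *ᵥ rightSingularVector A j) ⬝ᵥ (A *ᵥ rightSingularVector A j) = singularValue A j ^ 2 := by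
  rw [mulVec_dotProduct_mulVec, transpose_mul_self_mulVec_rightSingularVector, dotProduct_smul,
    rightSingularVector_dotProduct, if_pos rfl, smul_eq_mul, mul_one]

lemma rightSingularVector_dotProduct_sum_smul (A : Matrix p m ℝ) (c : m → ℝ) (k : m) :
    rightSingularVector A k ⬝ᵥ ∑ j, c j • rightSingularVector A j = c k := by
  simp [dotProduct_sum, dotProduct_smul, rightSingularVector_dotProduct]

lemma mulVec_dotProduct_self_le (A : Matrix p m ℝ) (x : m → ℝ) :
    (A *ᵥ x) ⬝ᵥ (A *ᵥ x) ≤ opNorm A ^ 2 * (x ⬝ᵥ x) := by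
  rw [mulVec_dotProduct_self_eq_sum, ← sum_dotProduct_rightSingularVector_sq A x, Finset.mul_sum]
  gcongr with j
  exacts [singularValue_nonneg A j, singularValue_le_opNorm A j]

lemma trace_transpose_mul_eq_sum_rightSingularVector (Q A : Matrix p m ℝ) :
    trace (Qᵀ * A) =
      ∑ j, (Q *ᵥ rightSingularVector A j) ⬝ᵥ (A *ᵥ rightSingularVector A j) := by
  conv_lhs => rw [← Matrix.mul_one (Qᵀ * A), ← sum_vecMulVec_rightSingularVector A]
  simp only [Matrix.mul_sum, trace_sum, mul_vecMulVec, trace_vecMulVec, mulVec_dotProduct_mulVec]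
  exact Finset.sum_congr rfl fun j _ => dotProduct_comm _ _

lemma trace_transpose_mul_le_mul_nuclearNorm {Q : Matrix p m ℝ} {c : ℝ} (hc : 0 ≤ c)
    (hQ : ∀ y, (Q *ᵥ y) ⬝ᵥ (Q *ᵥ y) ≤ c ^ 2 * (y ⬝ᵥ y)) (A : Matrix p m ℝ) :
    trace (Qᵀ * A) ≤ c * nuclearNorm A := by
  rw [trace_transpose_mul_eq_sum_rightSingularVector, nuclearNorm_eq_sum_singularValue,
    Finset.mul_sum]
  refine Finset.sum_le_sum fun j _ => dotProduct_le_mul_of_dotProduct_self_le hc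
    (singularValue_nonneg A j) ?_ (mulVec_rightSingularVector_dotProduct_self A j).le
  simpa [rightSingularVector_dotProduct] using hQ (rightSingularVector A j)

lemma trace_transpose_mul_le_opNorm_mul_nuclearNorm (Q A : Matrix p m ℝ) :
    trace (Qᵀ * A) ≤ opNorm Q * nuclearNorm A :=
  trace_transpose_mul_le_mul_nuclearNorm (Real.iSup_nonneg fun j => singularValue_nonneg Q j)
    (mulVec_dotProduct_self_le Q) A

lemma trace_transpose_mul_le_nuclearNorm {Q : Matrix p m ℝ}
    (hQ : ∀ y, (Q *ᵥ y) ⬝ᵥ (Q *ᵥ y) ≤ y ⬝ᵥ y) (A : Matrix p m ℝ) :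
    trace (Qᵀ * A) ≤ nuclearNorm A := by
  simpa using trace_transpose_mul_le_mul_nuclearNorm zero_le_one (by simpa using hQ) A

end SingularValues

section PolarPart

variable {p m : Type*} [Fintype p] [Fintype m] [DecidableEq m]

/-- The factor `U Vᵀ` of a singular value decomposition `A = U Σ Vᵀ`, written as
`A (AᵀA)^{+1/2}`; since `0⁻¹ = 0`, it vanishes on the kernel of `A`. -/
noncomputable def polarPart (A : Matrix p m ℝ) : Matrix p m ℝ :=
  A * ∑ j, (singularValue A j)⁻¹ • vecMulVec (rightSingularVector A j) (rightSingularVector A j)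

lemma trace_transpose_mul_polarPart (A : Matrix p m ℝ) :
    trace (Aᵀ * polarPart A) = nuclearNorm A := by
  simp only [polarPart, Matrix.mul_sum, Matrix.mul_smul, trace_sum, trace_smul, mul_vecMulVec,
    mulVec_mulVec, transpose_mul_self_mulVec_rightSingularVector, trace_vecMulVec, smul_dotProduct,
    rightSingularVector_dotProduct, if_pos, smul_eq_mul, mul_one, nuclearNorm_eq_sum_singularValue]
  refine Finset.sum_congr rfl fun j _ => ?_
  rcases eq_or_ne (singularValue A j) 0 with h | h
  · simp [h]
  · field_simp

lemma polarPart_mulVec_dotProduct_self_le (A : Matrix p m ℝ) (x : m → ℝ) :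
    (polarPart A *ᵥ x) ⬝ᵥ (polarPart A *ᵥ x) ≤ x ⬝ᵥ x := by
  have hx : polarPart A *ᵥ x = A *ᵥ ∑ j, ((singularValue A j)⁻¹ * (rightSingularVector A j ⬝ᵥ x))
      • rightSingularVector A j := by
    simp only [polarPart, ← mulVec_mulVec, sum_mulVec, smul_mulVec, vecMulVec_mulVec,
      op_smul_eq_smul, smul_smul]
  rw [hx, mulVec_dotProduct_self_eq_sum, ← sum_dotProduct_rightSingularVector_sq A x]
  refine Finset.sum_le_sum fun j _ => ?_
  rw [rightSingularVector_dotProduct_sum_smul]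
  rcases eq_or_ne (singularValue A j) 0 with h | h
  · simp [h, sq_nonneg]
  · rw [mul_pow, inv_pow, ← mul_assoc, mul_inv_cancel₀ (pow_ne_zero 2 h), one_mul]

lemma mul_polarPart_eq_zero {A : Matrix p m ℝ} {P : Matrix p p ℝ} (h : P * A = 0) :
    P * polarPart A = 0 := by
  rw [polarPart, ← Matrix.mul_assoc, h, Matrix.zero_mul]

lemma mul_polarPart_eq_self {A : Matrix p m ℝ} {P : Matrix p p ℝ} (h : P * A = A) :
    P * polarPart A = polarPart A := by
  rw [polarPart, ← Matrix.mul_assoc, h]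

lemma polarPart_mul_eq_zero {A : Matrix p m ℝ} {P : Matrix m m ℝ} (h : A * P = 0) :
    polarPart A * P = 0 := by
  rw [polarPart, Matrix.mul_assoc, Matrix.sum_mul]
  refine (congrArg (A * ·) (Finset.sum_eq_zero fun j _ => ?_)).trans (Matrix.mul_zero A)
  rcases eq_or_ne (singularValue A j) 0 with hj | hj
  · simp [hj]
  · have hv : rightSingularVector A j ᵥ* P = 0 := by
      have hrow : rightSingularVector A j =
          (singularValue A j ^ 2)⁻¹ • (A *ᵥ rightSingularVector A j) ᵥ* A := by
        rw [← mulVec_transpose, mulVec_mulVec, transpose_mul_self_mulVec_rightSingularVector,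
          smul_smul, inv_mul_cancel₀ (pow_ne_zero 2 hj), one_smul]
      rw [hrow, smul_vecMul, vecMul_vecMul, h, vecMul_zero, smul_zero]
    rw [Matrix.smul_mul, vecMulVec_mul, hv, vecMulVec_zero, smul_zero]

end PolarPart

section NuclearNorm

variable {p m : Type*} [Fintype p] [Fintype m] [DecidableEq m]

lemma nuclearNorm_add_le (A B : Matrix p m ℝ) :
    nuclearNorm (A + B) ≤ nuclearNorm A + nuclearNorm B := by
  have hQ := polarPart_mulVec_dotProduct_self_le (A + B)
  calc nuclearNorm (A + B)
      = trace ((polarPart (A + B))ᵀ * A) + trace ((polarPart (A + B))ᵀ * B) := by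
        rw [← trace_transpose_mul_polarPart, trace_transpose_mul_comm, Matrix.mul_add, trace_add]
    _ ≤ nuclearNorm A + nuclearNorm B :=
        add_le_add (trace_transpose_mul_le_nuclearNorm hQ A) (trace_transpose_mul_le_nuclearNorm hQ B)

lemma nuclearNorm_neg (A : Matrix p m ℝ) : nuclearNorm (-A) = nuclearNorm A := by
  have h : (-A)ᵀ * -A = Aᵀ * A := by simp
  unfold nuclearNorm
  congr! 4

lemma nuclearNorm_add_nuclearNorm_le_nuclearNorm_add {W Z : Matrix p m ℝ} {P : Matrix p p ℝ}
    {R : Matrix m m ℝ} (hP : Pᵀ = P) (hR : Rᵀ = R) (hRR : R * R = R)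
    (hPW : P * W = 0) (hWR : W * R = 0) (hPZ : P * Z = Z) (hZR : Z * R = Z) :
    nuclearNorm W + nuclearNorm Z ≤ nuclearNorm (W + Z) := by
  set Q₁ := polarPart W
  set Q₂ := polarPart Z
  have hPQ₂ : P * Q₂ = Q₂ := mul_polarPart_eq_self hPZ
  have hQ₂R : Q₂ * R = Q₂ := by
    have h := polarPart_mul_eq_zero (P := 1 - R) (A := Z)
      (by rw [Matrix.mul_sub, Matrix.mul_one, hZR, sub_self])
    rwa [Matrix.mul_sub, Matrix.mul_one, sub_eq_zero, eq_comm] at h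
  have hWQ₂ : trace (Wᵀ * Q₂) = 0 := by
    rw [← hPQ₂, ← Matrix.mul_assoc, ← hP, ← transpose_mul, hPW, transpose_zero, Matrix.zero_mul,
      trace_zero]
  have hZQ₁ : trace (Zᵀ * Q₁) = 0 := by
    rw [← hPZ, transpose_mul, hP, Matrix.mul_assoc, mul_polarPart_eq_zero hPW, Matrix.mul_zero,
      trace_zero]
  have hQ := add_mulVec_dotProduct_self_le (polarPart_mulVec_dotProduct_self_le W)
    (polarPart_mulVec_dotProduct_self_le Z) hP hR hRR (mul_polarPart_eq_zero hPW) hPQ₂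
    (polarPart_mul_eq_zero hWR) hQ₂R
  calc nuclearNorm W + nuclearNorm Z = trace ((W + Z)ᵀ * (Q₁ + Q₂)) := by
        rw [transpose_add, Matrix.add_mul, Matrix.mul_add, Matrix.mul_add, trace_add, trace_add,
          trace_add, hWQ₂, hZQ₁, trace_transpose_mul_polarPart, trace_transpose_mul_polarPart]
        ring
    _ = trace ((Q₁ + Q₂)ᵀ * (W + Z)) := trace_transpose_mul_comm _ _
    _ ≤ nuclearNorm (W + Z) := trace_transpose_mul_le_nuclearNorm hQ _

lemma nuclearNorm_sub_nuclearNorm_add_le {W D : Matrix p m ℝ} {P : Matrix p p ℝ} {R : Matrix m m ℝ}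
    (hP : Pᵀ = P) (hPP : P * P = P) (hR : Rᵀ = R) (hRR : R * R = R) (hPW : P * W = 0)
    (hWR : W * R = 0) :
    nuclearNorm W - nuclearNorm (W + D) ≤ nuclearNorm (D - P * D * R) - nuclearNorm (P * D * R) := by
  have hdec := nuclearNorm_add_nuclearNorm_le_nuclearNorm_add (Z := P * D * R) hP hR hRR hPW hWR
    (by rw [← Matrix.mul_assoc, ← Matrix.mul_assoc, hPP]) (by rw [Matrix.mul_assoc, hRR])
  have htri : nuclearNorm (W + P * D * R) ≤ nuclearNorm (W + D) + nuclearNorm (D - P * D * R) := by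
    rw [← nuclearNorm_neg (D - P * D * R)]
    convert nuclearNorm_add_le (W + D) (-(D - P * D * R)) using 2
    abel
  linarith

end NuclearNorm

section Game

variable {n m : ℕ}

lemma frobNorm_sq {p q : Type*} [Fintype p] [Fintype q] (A : Matrix p q ℝ) :
    frobNorm A ^ 2 = ∑ i, ∑ j, A i j ^ 2 :=
  Real.sq_sqrt (Finset.sum_nonneg fun _ _ => Finset.sum_nonneg fun _ _ => sq_nonneg _)

lemma rowSub_add (I : Finset (Fin n)) (A B : Matrix (Fin n) (Fin m) ℝ) :
    rowSub I (A + B) = rowSub I A + rowSub I B := rfl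

lemma frobNorm_projObs_sub_sq (Ω : Finset (Fin n × Fin m)) (A B : Matrix (Fin n) (Fin m) ℝ) :
    frobNorm (projObs Ω (A - B)) ^ 2 =
      frobNorm (projObs Ω A) ^ 2 - 2 * trace ((projObs Ω A)ᵀ * B) + frobNorm (projObs Ω B) ^ 2 := by
  simp only [frobNorm_sq, trace_transpose_mul_eq_sum, ← Finset.sum_sub_distrib,
    ← Finset.sum_add_distrib, Finset.mul_sum]
  refine Finset.sum_congr rfl fun i _ => Finset.sum_congr rfl fun j _ => ?_
  simp only [projObs, of_apply, Matrix.sub_apply]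
  split_ifs <;> ring

lemma half_frobNorm_projObs_sq_le {C : Type*} [Fintype C] {Ω : Finset (Fin n × Fin m)}
    {I : C → Finset (Fin n)} {lam : C → ℝ} {Wstar E What : Matrix (Fin n) (Fin m) ℝ}
    (h : gameObj Ω (Wstar + E) I lam What ≤ gameObj Ω (Wstar + E) I lam Wstar) :
    (1 / 2) * frobNorm (projObs Ω (What - Wstar)) ^ 2 ≤
      trace ((projObs Ω E)ᵀ * (What - Wstar)) +
        ∑ c, lam c * (nuclearNorm (rowSub (I c) Wstar) - nuclearNorm (rowSub (I c) What)) := by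
  rw [gameObj, gameObj, add_sub_cancel_left, show Wstar + E - What = E - (What - Wstar) by abel,
    frobNorm_projObs_sub_sq] at h
  simp only [mul_sub, Finset.sum_sub_distrib]
  linarith

lemma trace_transpose_mul_eq_sum_blocks {C : Type*} [Fintype C] {I : C → Finset (Fin n)}
    (hcover : ∀ i, ∃ c, i ∈ I c) (A B : Matrix (Fin n) (Fin m) ℝ) :
    trace (Aᵀ * B) =
      ∑ c, trace ((of fun (i : I c) j => A i j / (kappa I i : ℝ))ᵀ * rowSub (I c) B) := by
  set g : Fin n → ℝ := fun i => ∑ j, A i j * B i j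
  have hblock c : trace ((of fun (i : I c) j => A i j / (kappa I i : ℝ))ᵀ * rowSub (I c) B) =
      ∑ i, if i ∈ I c then g i / kappa I i else 0 := by
    rw [Finset.sum_ite_mem Finset.univ (I c), Finset.univ_inter, ← Finset.sum_coe_sort,
      trace_transpose_mul_eq_sum]
    simp only [g, of_apply, rowSub, Finset.sum_div, div_mul_eq_mul_div]
  have hkappa i : (kappa I i : ℝ) ≠ 0 := by
    obtain ⟨c, hc⟩ := hcover i
    exact Nat.cast_ne_zero.2 (Finset.card_ne_zero.2 ⟨c, Finset.mem_filter.2 ⟨Finset.mem_univ c, hc⟩⟩)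
  simp only [hblock]
  rw [Finset.sum_comm, trace_transpose_mul_eq_sum]
  refine Finset.sum_congr rfl fun i _ => ?_
  rw [← Finset.sum_filter, Finset.sum_const, nsmul_eq_mul, ← kappa, mul_div_cancel₀ _ (hkappa i)]

end Game

theorem game_group_cone_constraint_general
    {n m : ℕ} {C : Type*} [Fintype C]
    (Wstar E : Matrix (Fin n) (Fin m) ℝ)
    (Ω : Finset (Fin n × Fin m))
    (I : C → Finset (Fin n)) (hcover : ∀ i : Fin n, ∃ c, i ∈ I c)
    (lam : C → ℝ) (hlam : ∀ c, 0 ≤ lam c)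
    (Pu : ∀ c : C, Matrix (I c) (I c) ℝ) (Pv : C → Matrix (Fin m) (Fin m) ℝ)
    (hPu_symm : ∀ c, (Pu c)ᵀ = Pu c) (hPu_idem : ∀ c, Pu c * Pu c = Pu c)
    (hPu_ker : ∀ c, ∀ x : I c → ℝ,
      Pu c *ᵥ x = 0 ↔ ∃ y : Fin m → ℝ, rowSub (I c) Wstar *ᵥ y = x)
    (hPv_symm : ∀ c, (Pv c)ᵀ = Pv c) (hPv_idem : ∀ c, Pv c * Pv c = Pv c)
    (hPv_ker : ∀ c, ∀ x : Fin m → ℝ,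
      Pv c *ᵥ x = 0 ↔ ∃ y : I c → ℝ, (rowSub (I c) Wstar)ᵀ *ᵥ y = x)
    (hlam_spec : ∀ c, 2 * opNorm (Matrix.of fun (i : I c) (j : Fin m) =>
        projObs Ω E i.1 j / (kappa I i.1 : ℝ)) ≤ lam c)
    (F : Set (Matrix (Fin n) (Fin m) ℝ)) (hWstarF : Wstar ∈ F)
    (What : Matrix (Fin n) (Fin m) ℝ)
    (hmin : ∀ W ∈ F, gameObj Ω (Wstar + E) I lam What ≤ gameObj Ω (Wstar + E) I lam W) :
    (∑ c : C, lam c *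
        nuclearNorm (Pu c * rowSub (I c) (What - Wstar) * Pv c) ≤
      3 * ∑ c : C, lam c *
        nuclearNorm (rowSub (I c) (What - Wstar) -
          Pu c * rowSub (I c) (What - Wstar) * Pv c)) ∧
    (1 / 2) * frobNorm (projObs Ω (What - Wstar)) ^ 2 ≤
      (3 / 2) * ∑ c : C, lam c *
        nuclearNorm (rowSub (I c) (What - Wstar) -
          Pu c * rowSub (I c) (What - Wstar) * Pv c) := by
  set Δ := What - Wstar
  have hPuW c : Pu c * rowSub (I c) Wstar = 0 :=
    mul_eq_zero_of_mulVec_mulVec_eq_zero fun y => (hPu_ker c _).2 ⟨y, rfl⟩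
  have hWPv c : rowSub (I c) Wstar * Pv c = 0 := by
    rw [← transpose_eq_zero, transpose_mul, hPv_symm]
    exact mul_eq_zero_of_mulVec_mulVec_eq_zero fun y => (hPv_ker c _).2 ⟨y, rfl⟩
  have hnoise : trace ((projObs Ω E)ᵀ * Δ) ≤ ∑ c, lam c / 2 * nuclearNorm (rowSub (I c) Δ) := by
    rw [trace_transpose_mul_eq_sum_blocks hcover]
    refine Finset.sum_le_sum fun c _ => (trace_transpose_mul_le_opNorm_mul_nuclearNorm _ _).trans ?_
    exact mul_le_mul_of_nonneg_right (by linarith [hlam_spec c]) (nuclearNorm_nonneg _)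
  have hblock c : lam c / 2 * nuclearNorm (rowSub (I c) Δ) + lam c *
      (nuclearNorm (rowSub (I c) Wstar) - nuclearNorm (rowSub (I c) What)) ≤
      3 / 2 * (lam c * nuclearNorm (rowSub (I c) Δ - Pu c * rowSub (I c) Δ * Pv c)) -
        1 / 2 * (lam c * nuclearNorm (Pu c * rowSub (I c) Δ * Pv c)) := by
    have hdec := nuclearNorm_sub_nuclearNorm_add_le (D := rowSub (I c) Δ) (hPu_symm c) (hPu_idem c)
      (hPv_symm c) (hPv_idem c) (hPuW c) (hWPv c)
    have htri := nuclearNorm_add_le (Pu c * rowSub (I c) Δ * Pv c)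
      (rowSub (I c) Δ - Pu c * rowSub (I c) Δ * Pv c)
    rw [← rowSub_add, add_sub_cancel] at hdec
    rw [add_sub_cancel] at htri
    linarith [mul_le_mul_of_nonneg_left hdec (hlam c), mul_le_mul_of_nonneg_left htri (hlam c)]
  have hsum := Finset.sum_le_sum fun c (_ : c ∈ Finset.univ) => hblock c
  simp only [Finset.sum_add_distrib, Finset.sum_sub_distrib, ← Finset.mul_sum] at hsum
  have hbasic := half_frobNorm_projObs_sq_le (hmin Wstar hWstarF)
  have hS : 0 ≤ ∑ c, lam c * nuclearNorm (Pu c * rowSub (I c) Δ * Pv c) :=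
    Finset.sum_nonneg fun c _ => mul_nonneg (hlam c) (nuclearNorm_nonneg _)
  constructor <;> linarith [sq_nonneg (frobNorm (projObs Ω Δ))]

/-- **Group cone constraint.** In the GAME setting with `X = W★ + E`, overlapping
row blocks `I_c` covering `[n]`, multiplicity-reweighted noise matrices
`Ẽ^{(c)}` with entries `[P_Ω(E)]_{ij}/κ(i)` for `i ∈ I_c`, per-block projections
`P_{M_c⊥}(B) = Pu_c B Pv_c` and `P_{M_c}(B) = B − Pu_c B Pv_c` (where `Pu_c`, `Pv_c`
are the orthogonal projections onto the orthogonal complements of the column and row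
spaces of `W★_c`, of rank `r_c`), if `Ŵ` minimizes the GAME objective over a feasible
set containing `W★`, `Δ := Ŵ − W★`, and `λ_c ≥ 2‖Ẽ^{(c)}‖_op` for every `c`, then
(i) `Σ_c λ_c ‖P_{M_c⊥}(Δ_c)‖_* ≤ 3 Σ_c λ_c ‖P_{M_c}(Δ_c)‖_*`, and
(ii) `(1/2)‖P_Ω(Δ)‖_F² ≤ (3/2) Σ_c λ_c ‖P_{M_c}(Δ_c)‖_*`. -/
theorem game_group_cone_constraint
    {n m : ℕ} {C : Type*} [Fintype C]
    (Wstar E : Matrix (Fin n) (Fin m) ℝ)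
    (Ω : Finset (Fin n × Fin m))
    (I : C → Finset (Fin n)) (hcover : ∀ i : Fin n, ∃ c, i ∈ I c)
    (lam : C → ℝ) (hlam : ∀ c, 0 ≤ lam c)
    (r : C → ℕ) (hr : ∀ c, (rowSub (I c) Wstar).rank = r c)
    (Pu : ∀ c : C, Matrix (I c) (I c) ℝ) (Pv : C → Matrix (Fin m) (Fin m) ℝ)
    (hPu_symm : ∀ c, (Pu c)ᵀ = Pu c) (hPu_idem : ∀ c, Pu c * Pu c = Pu c)
    (hPu_ker : ∀ c, ∀ x : I c → ℝ,
      Pu c *ᵥ x = 0 ↔ ∃ y : Fin m → ℝ, rowSub (I c) Wstar *ᵥ y = x)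
    (hPv_symm : ∀ c, (Pv c)ᵀ = Pv c) (hPv_idem : ∀ c, Pv c * Pv c = Pv c)
    (hPv_ker : ∀ c, ∀ x : Fin m → ℝ,
      Pv c *ᵥ x = 0 ↔ ∃ y : I c → ℝ, (rowSub (I c) Wstar)ᵀ *ᵥ y = x)
    (hlam_spec : ∀ c, 2 * opNorm (Matrix.of fun (i : I c) (j : Fin m) =>
        projObs Ω E i.1 j / (kappa I i.1 : ℝ)) ≤ lam c)
    (F : Set (Matrix (Fin n) (Fin m) ℝ)) (hWstarF : Wstar ∈ F)
    (What : Matrix (Fin n) (Fin m) ℝ) (hWhatF : What ∈ F)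
    (hmin : ∀ W ∈ F, gameObj Ω (Wstar + E) I lam What ≤ gameObj Ω (Wstar + E) I lam W) :
    (∑ c : C, lam c *
        nuclearNorm (Pu c * rowSub (I c) (What - Wstar) * Pv c) ≤
      3 * ∑ c : C, lam c *
        nuclearNorm (rowSub (I c) (What - Wstar) -
          Pu c * rowSub (I c) (What - Wstar) * Pv c)) ∧
    (1 / 2) * frobNorm (projObs Ω (What - Wstar)) ^ 2 ≤
      (3 / 2) * ∑ c : C, lam c *
        nuclearNorm (rowSub (I c) (What - Wstar) -
          Pu c * rowSub (I c) (What - Wstar) * Pv c) :=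
  game_group_cone_constraint_general Wstar E Ω I hcover lam hlam Pu Pv hPu_symm hPu_idem hPu_ker
    hPv_symm hPv_idem hPv_ker hlam_spec F hWstarF What hmin
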